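/- Let Ω ⊆ ℂ be open and U: Ω → ℂ smooth. Suppose ψ = (ψ₁, ψ₂) satisfies ∂̄ψ₁ = conj(U)ψ₂, ∂ψ₂ = −Uψ₁, and φ = (φ₁, φ₂) satisfies ∂̄φ₁ = Uφ₂, ∂φ₂ = −conj(U)φ₁. Define the 2×2 matrix-valued functions M = i·[[ψ₁conj(φ₂), −conj(ψ₂)conj(φ₂)], [ψ₁φ₁, −conj(ψ₂)φ₁]] and N = i·[[ψ₂conj(φ₁), conj(ψ₁)conj(φ₁)], [−ψ₂φ₂, −conj(ψ₁)φ₂]]. Then ∂̄M = ∂N entrywise on Ω; i.e., the matrix-valued 1-form M dz + N dz̄ (the integrand defining the potential matrix S(Φ,Ψ) of the Moutard transformation) is closed. -/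

import Mathlib

open ComplexConjugate

/-- The Wirtinger derivative `∂g = (∂g/∂x − i ∂g/∂y)/2` of `g : ℂ → ℂ`. -/
noncomputable def wdz (g : ℂ → ℂ) (z : ℂ) : ℂ :=
  (fderiv ℝ g z 1 - Complex.I * fderiv ℝ g z Complex.I) / 2

/-- The Wirtinger derivative `∂̄g = (∂g/∂x + i ∂g/∂y)/2` of `g : ℂ → ℂ`. -/
noncomputable def wdzbar (g : ℂ → ℂ) (z : ℂ) : ℂ :=
  (fderiv ℝ g z 1 + Complex.I * fderiv ℝ g z Complex.I) / 2

lemma wdzbar_mul (f g : ℂ → ℂ) (z : ℂ) (hf : DifferentiableAt ℝ f z)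
    (hg : DifferentiableAt ℝ g z) :
    wdzbar (fun w => f w * g w) z = wdzbar f z * g z + f z * wdzbar g z := by
  unfold wdzbar
  rw [fderiv_fun_mul hf hg]
  simp only [ContinuousLinearMap.add_apply, ContinuousLinearMap.smul_apply, smul_eq_mul]
  ring

lemma wdz_mul (f g : ℂ → ℂ) (z : ℂ) (hf : DifferentiableAt ℝ f z)
    (hg : DifferentiableAt ℝ g z) :
    wdz (fun w => f w * g w) z = wdz f z * g z + f z * wdz g z := by
  unfold wdz
  rw [fderiv_fun_mul hf hg]
  simp only [ContinuousLinearMap.add_apply, ContinuousLinearMap.smul_apply, smul_eq_mul]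
  ring

lemma fderiv_conj_apply (f : ℂ → ℂ) (z v : ℂ) :
    fderiv ℝ (fun w => conj (f w)) z v = conj (fderiv ℝ f z v) := by
  simp only [starRingEnd_apply, fderiv_star, ContinuousLinearMap.coe_comp',
    Function.comp_apply, ContinuousLinearEquiv.coe_coe, starL'_apply]

lemma wdzbar_conj (f : ℂ → ℂ) (z : ℂ) :
    wdzbar (fun w => conj (f w)) z = conj (wdz f z) := by
  unfold wdz wdzbar
  rw [fderiv_conj_apply, fderiv_conj_apply, map_div₀, map_sub, map_mul, Complex.conj_I,
    map_ofNat]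
  ring

lemma wdz_conj (f : ℂ → ℂ) (z : ℂ) :
    wdz (fun w => conj (f w)) z = conj (wdzbar f z) := by
  unfold wdz wdzbar
  rw [fderiv_conj_apply, fderiv_conj_apply, map_div₀, map_add, map_mul, Complex.conj_I,
    map_ofNat]
  ring

lemma wdzbar_I_mul (f : ℂ → ℂ) (z : ℂ) (hf : DifferentiableAt ℝ f z) :
    wdzbar (fun w => Complex.I * f w) z = Complex.I * wdzbar f z := by
  unfold wdzbar
  rw [fderiv_const_mul hf]
  simp only [ContinuousLinearMap.smul_apply, smul_eq_mul]
  ring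

lemma wdz_I_mul (f : ℂ → ℂ) (z : ℂ) (hf : DifferentiableAt ℝ f z) :
    wdz (fun w => Complex.I * f w) z = Complex.I * wdz f z := by
  unfold wdz
  rw [fderiv_const_mul hf]
  simp only [ContinuousLinearMap.smul_apply, smul_eq_mul]
  ring

lemma wdzbar_neg (f : ℂ → ℂ) (z : ℂ) :
    wdzbar (fun w => -f w) z = -wdzbar f z := by
  unfold wdzbar
  rw [fderiv_fun_neg]
  simp only [ContinuousLinearMap.neg_apply]
  ring

lemma wdz_neg (f : ℂ → ℂ) (z : ℂ) :
    wdz (fun w => -f w) z = -wdz f z := by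
  unfold wdz
  rw [fderiv_fun_neg]
  simp only [ContinuousLinearMap.neg_apply]
  ring

/-- if `Dψ = 0` and `D^∨φ = 0`, then the matrix-valued 1-form
`M dz + N dz̄` (the integrand defining the matrix `S(Φ,Ψ)` of the Moutard
transformation) is closed: `∂̄M = ∂N` entrywise on `Ω`. -/
theorem stmt9 (Ω : Set ℂ) (hΩ : IsOpen Ω)
    (U : ℂ → ℂ) (hU : ContDiffOn ℝ (⊤ : ℕ∞) U Ω)
    (ψ₁ ψ₂ φ₁ φ₂ : ℂ → ℂ)
    (hψ₁ : ContDiffOn ℝ (⊤ : ℕ∞) ψ₁ Ω) (hψ₂ : ContDiffOn ℝ (⊤ : ℕ∞) ψ₂ Ω)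
    (hφ₁ : ContDiffOn ℝ (⊤ : ℕ∞) φ₁ Ω) (hφ₂ : ContDiffOn ℝ (⊤ : ℕ∞) φ₂ Ω)
    (hψa : ∀ z ∈ Ω, wdzbar ψ₁ z = conj (U z) * ψ₂ z)
    (hψb : ∀ z ∈ Ω, wdz ψ₂ z = -U z * ψ₁ z)
    (hφa : ∀ z ∈ Ω, wdzbar φ₁ z = U z * φ₂ z)
    (hφb : ∀ z ∈ Ω, wdz φ₂ z = -conj (U z) * φ₁ z)
    (M N : ℂ → Matrix (Fin 2) (Fin 2) ℂ)
    (hM : M = fun z => Complex.I •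
      !![ψ₁ z * conj (φ₂ z), -(conj (ψ₂ z) * conj (φ₂ z));
         ψ₁ z * φ₁ z, -(conj (ψ₂ z) * φ₁ z)])
    (hN : N = fun z => Complex.I •
      !![ψ₂ z * conj (φ₁ z), conj (ψ₁ z) * conj (φ₁ z);
         -(ψ₂ z * φ₂ z), -(conj (ψ₁ z) * φ₂ z)]) :
    ∀ z ∈ Ω, ∀ i j : Fin 2,
      wdzbar (fun w => M w i j) z = wdz (fun w => N w i j) z := by
  subst hM hN
  intro z hz i j
  have d1 : DifferentiableAt ℝ ψ₁ z := (hψ₁.contDiffAt (hΩ.mem_nhds hz)).differentiableAt (by simp)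
  have d2 : DifferentiableAt ℝ ψ₂ z := (hψ₂.contDiffAt (hΩ.mem_nhds hz)).differentiableAt (by simp)
  have d3 : DifferentiableAt ℝ φ₁ z := (hφ₁.contDiffAt (hΩ.mem_nhds hz)).differentiableAt (by simp)
  have d4 : DifferentiableAt ℝ φ₂ z := (hφ₂.contDiffAt (hΩ.mem_nhds hz)).differentiableAt (by simp)
  have c1 : DifferentiableAt ℝ (fun w => conj (ψ₁ w)) z := d1.star
  have c2 : DifferentiableAt ℝ (fun w => conj (ψ₂ w)) z := d2.star
  have c3 : DifferentiableAt ℝ (fun w => conj (φ₁ w)) z := d3.star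
  have c4 : DifferentiableAt ℝ (fun w => conj (φ₂ w)) z := d4.star
  fin_cases i <;> fin_cases j <;>
    simp only [Matrix.smul_apply, Matrix.cons_val', Matrix.cons_val_zero, Matrix.cons_val_one,
      Matrix.head_cons, Matrix.empty_val', Matrix.cons_val_fin_one, Matrix.head_fin_const,
      Matrix.of_apply, smul_eq_mul, Fin.isValue, Fin.zero_eta, Fin.mk_one]
  · rw [wdzbar_I_mul _ z (d1.fun_mul c4), wdz_I_mul _ z (d2.fun_mul c3),
      wdzbar_mul ψ₁ _ z d1 c4, wdz_mul ψ₂ _ z d2 c3, wdzbar_conj φ₂ z, wdz_conj φ₁ z,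
      hψa z hz, hψb z hz, hφa z hz, hφb z hz]
    simp only [map_mul, map_neg, Complex.conj_conj]
    ring
  · rw [wdzbar_I_mul _ z (c2.fun_mul c4).fun_neg, wdz_I_mul _ z (c1.fun_mul c3),
      wdzbar_neg, wdzbar_mul _ _ z c2 c4, wdz_mul _ _ z c1 c3,
      wdzbar_conj ψ₂ z, wdzbar_conj φ₂ z, wdz_conj ψ₁ z, wdz_conj φ₁ z,
      hψa z hz, hψb z hz, hφa z hz, hφb z hz]
    simp only [map_mul, map_neg, Complex.conj_conj]
    ring
  · rw [wdzbar_I_mul _ z (d1.fun_mul d3), wdz_I_mul _ z (d2.fun_mul d4).fun_neg,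
      wdzbar_mul ψ₁ φ₁ z d1 d3, wdz_neg, wdz_mul ψ₂ φ₂ z d2 d4,
      hψa z hz, hψb z hz, hφa z hz, hφb z hz]
    ring
  · rw [wdzbar_I_mul _ z (c2.fun_mul d3).fun_neg, wdz_I_mul _ z (c1.fun_mul d4).fun_neg,
      wdzbar_neg, wdz_neg, wdzbar_mul _ φ₁ z c2 d3, wdz_mul _ φ₂ z c1 d4,
      wdzbar_conj ψ₂ z, wdz_conj ψ₁ z,
      hψa z hz, hψb z hz, hφa z hz, hφb z hz]
    simp only [map_mul, map_neg, Complex.conj_conj]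
    ring
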